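/- arXiv:1401.7292 — 5 statements merged into one kernel-verified Lean document; each statement's English description precedes it below -/
import Mathlib

section
/- Let U be a hyperbolic domain in ℂ (a domain whose complement contains at least two points) and let z, z' ∈ U. Then |z - z'| / dist(z, ∂U) ≥ 1 - exp(-ρ_U(z, z')/2), where ρ_U denotes the hyperbolic distance in U. -/
/-- The Poincaré (hyperbolic) distance on the unit disc,
`2 * artanh |(a-b)/(1-conj a * b)|` written via `log`. -/
noncomputable def poincareDisc (a b : ℂ) : ℝ :=
  Real.log ((1 + ‖(a - b) / (1 - (starRingEnd ℂ) a * b)‖) /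
    (1 - ‖(a - b) / (1 - (starRingEnd ℂ) a * b)‖))

/-- The Kobayashi distance on a plane domain `U`, defined via chains of analytic discs.
For a hyperbolic plane domain this coincides with the hyperbolic (Poincaré) distance
obtained by pulling back the disc metric via a universal covering. -/
noncomputable def kobayashiDist (U : Set ℂ) (z w : ℂ) : ℝ :=
  sInf { d : ℝ | ∃ (n : ℕ) (φ : ℕ → ℂ → ℂ) (a b : ℕ → ℂ),
    0 < n ∧
    (∀ i < n, DifferentiableOn ℂ (φ i) (Metric.ball 0 1) ∧
      Set.MapsTo (φ i) (Metric.ball 0 1) U ∧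
      a i ∈ Metric.ball (0:ℂ) 1 ∧ b i ∈ Metric.ball (0:ℂ) 1) ∧
    φ 0 (a 0) = z ∧ φ (n - 1) (b (n - 1)) = w ∧
    (∀ i, i + 1 < n → φ i (b i) = φ (i + 1) (a (i + 1))) ∧
    d = ∑ i ∈ Finset.range n, poincareDisc (a i) (b i) }

lemma poincareDisc_nonneg (a b : ℂ) : 0 ≤ poincareDisc a b := by
  unfold poincareDisc
  set t := ‖(a - b) / (1 - (starRingEnd ℂ) a * b)‖ with ht
  have ht0 : 0 ≤ t := norm_nonneg _
  rcases lt_or_ge t 1 with h | h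
  · apply Real.log_nonneg
    rw [le_div_iff₀ (by linarith)]
    linarith
  · rcases eq_or_lt_of_le h with h1 | h1
    · simp [← h1]
    · rw [← Real.log_abs, abs_div, abs_of_pos (by linarith : (0:ℝ) < 1 + t),
        abs_of_neg (by linarith : 1 - t < 0)]
      apply Real.log_nonneg
      rw [le_div_iff₀ (by linarith)]
      linarith

lemma ball_infDist_frontier_subset {U : Set ℂ} (hopen : IsOpen U) {z : ℂ} (hz : z ∈ U) :
    Metric.ball z (Metric.infDist z (frontier U)) ⊆ U := by
  set r := Metric.infDist z (frontier U) with hr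
  rcases le_or_gt r 0 with h0 | h0
  · simp [Metric.ball_eq_empty.mpr h0]
  have hdisj : Disjoint (Metric.ball z r) (frontier U) := Metric.disjoint_ball_infDist
  have hpre : IsPreconnected (Metric.ball z r) := (convex_ball z r).isPreconnected
  intro w hw
  by_contra hwU
  have hfro : frontier U = closure U \ U := by
    rw [hopen.frontier_eq]
  have hsub : Metric.ball z r ⊆ U ∪ (closure U)ᶜ := by
    intro x hx
    by_cases hxc : x ∈ closure U
    · left
      by_contra hxU
      exact (hdisj.ne_of_mem hx (by rw [hfro]; exact ⟨hxc, hxU⟩)) rfl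
    · right; exact hxc
  have hzball : z ∈ Metric.ball z r := Metric.mem_ball_self h0
  have hwc : w ∈ (closure U)ᶜ := by
    intro hwc
    exact (hdisj.ne_of_mem hw (by rw [hfro]; exact ⟨hwc, hwU⟩)) rfl
  obtain ⟨x, -, hx1, hx2⟩ := hpre U (closure U)ᶜ hopen isClosed_closure.isOpen_compl hsub
    ⟨z, hzball, hz⟩ ⟨w, hw, hwc⟩
  exact hx2 (subset_closure hx1)

/-- Lemma 2.2 of the paper. For a hyperbolic domain `U ⊂ ℂ` and
`z, z' ∈ U`, `|z - z'| / dist(z, ∂U) ≥ 1 - exp(-ρ_U(z,z')/2)`. -/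
theorem stmt0 (U : Set ℂ) (hopen : IsOpen U) (hconn : IsConnected U)
    (hhyp : ∃ a b : ℂ, a ∉ U ∧ b ∉ U ∧ a ≠ b)
    (z z' : ℂ) (hz : z ∈ U) (hz' : z' ∈ U) :
    1 - Real.exp (-(kobayashiDist U z z') / 2) ≤
      ‖z - z'‖ / Metric.infDist z (frontier U) := by
  obtain ⟨p, q, hp, hq, hpq⟩ := hhyp
  set d := Metric.infDist z (frontier U) with hdd
  -- frontier is nonempty
  have hfr : (frontier U).Nonempty := by
    rw [nonempty_frontier_iff]
    exact ⟨⟨z, hz⟩, fun h => hp (h ▸ Set.mem_univ p)⟩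
  -- d > 0
  have hd : 0 < d := by
    rw [hdd, ← (isClosed_frontier.notMem_iff_infDist_pos hfr)]
    intro hzf
    exact (disjoint_frontier_iff_isOpen.mpr hopen).ne_of_mem hzf hz rfl
  rcases le_or_gt d ‖z - z'‖ with hle | hlt
  · -- trivial case: RHS ≥ 1 > LHS
    have h1 : (1:ℝ) ≤ ‖z - z'‖ / d := (one_le_div hd).mpr hle
    have := Real.exp_pos (-(kobayashiDist U z z') / 2)
    linarith
  -- main case
  set t := ‖z - z'‖ / d with htdef
  have ht0 : 0 ≤ t := div_nonneg (norm_nonneg _) hd.le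
  have ht1 : t < 1 := (div_lt_one hd).mpr hlt
  -- the Kobayashi distance is at most log((1+t)/(1-t)) via one affine disc
  have hkob : kobayashiDist U z z' ≤ Real.log ((1 + t) / (1 - t)) := by
    apply csInf_le
    · exact ⟨0, fun x ⟨n, φ, a, b, _, _, _, _, _, hsum⟩ => hsum ▸
        Finset.sum_nonneg fun i _ => poincareDisc_nonneg _ _⟩
    · refine ⟨1, fun _ w => z + d * w, fun _ => 0, fun _ => (z' - z) / d, one_pos, ?_, ?_, ?_,
        fun i hi => absurd hi (by omega), ?_⟩
      · intro i _
        refine ⟨(differentiable_const z |>.add ((differentiable_const _).mul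
            differentiable_id)).differentiableOn, ?_, by simp, ?_⟩
        · intro w hw
          apply ball_infDist_frontier_subset hopen hz
          simp only [Metric.mem_ball] at hw ⊢
          rw [dist_eq_norm]
          simp only [add_sub_cancel_left, norm_mul]
          calc ‖(d:ℂ)‖ * ‖w‖ ≤ d * ‖w‖ := by
                rw [Complex.norm_real, Real.norm_of_nonneg hd.le]
              _ < d * 1 := by
                apply mul_lt_mul_of_pos_left _ hd
                simpa [dist_eq_norm] using hw
              _ = d := mul_one d
        · simp only [Metric.mem_ball, dist_zero_right]
          rw [norm_div, Complex.norm_real, Real.norm_of_nonneg hd.le, div_lt_one hd]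
          calc ‖z' - z‖ = ‖z - z'‖ := by
                exact norm_sub_rev z' z
              _ < d := hlt
      · simp
      · have hdne : (d:ℂ) ≠ 0 := by exact_mod_cast hd.ne'
        field_simp
        ring
      · rw [Finset.sum_range_one]
        unfold poincareDisc
        congr 2 <;>
        · simp only [map_zero, zero_mul, sub_zero, zero_sub, div_one, map_neg_eq_map, norm_neg]
          rw [norm_div, Complex.norm_real, Real.norm_of_nonneg hd.le, htdef]
          congr 1
          rw [norm_sub_rev]
  -- conclude
  have hpos : (0:ℝ) < (1 + t) / (1 - t) := div_pos (by linarith) (by linarith)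
  set E := Real.exp (-(Real.log ((1 + t) / (1 - t))) / 2) with hE
  have hEle : E ≤ Real.exp (-(kobayashiDist U z z') / 2) := by
    apply Real.exp_le_exp.mpr
    linarith
  have hE2 : E ^ 2 = (1 - t) / (1 + t) := by
    rw [hE, ← Real.exp_nat_mul]
    have : (2:ℝ) * (-(Real.log ((1 + t) / (1 - t))) / 2) = -Real.log ((1 + t) / (1 - t)) := by
      ring
    rw [show ((2:ℕ):ℝ) = (2:ℝ) by norm_num, this, Real.exp_neg, Real.exp_log hpos,
      inv_div _ _]
  have hEpos : 0 < E := Real.exp_pos _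
  have hkey : 1 - t ≤ E := by
    by_contra hcon
    push_neg at hcon
    have h3 : E ^ 2 * (1 + t) = 1 - t := by
      rw [hE2]; field_simp
    have h4 : E ^ 2 < (1 - t) ^ 2 := by nlinarith
    nlinarith [mul_lt_mul_of_pos_right h4 (show (0:ℝ) < 1 + t by linarith),
      mul_nonneg (sq_nonneg t) (show (0:ℝ) ≤ 1 - t by linarith)]
  calc 1 - Real.exp (-(kobayashiDist U z z') / 2) ≤ 1 - E := by linarith
    _ ≤ t := by linarith
end

section
/- Let T : ℂ → ℂ, T(ω) = ω + 1, and let V ⊆ ℂ be an open set that is absorbing for T, i.e. T(V) ⊆ V and for every compact K ⊆ ℂ there is n ≥ 0 with T^n(K) ⊆ V. Then for every ω ∈ ℂ there exist m ∈ ℕ and a sequence d_n > 0 with d_n → ∞ such that the open disc D(T^n(ω), d_n) ⊆ V for every n ≥ m. -/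
/-- claim (3.1) in the proof of Theorem A. If `V` is an open absorbing set
for the translation `T(ω) = ω + 1` on `ℂ`, then for every `ω` there are `m` and radii
`d_n → ∞` with `D(ω + n, d_n) ⊆ V` for all `n ≥ m`. -/
theorem stmt4 (V : Set ℂ) (hV : IsOpen V)
    (hinv : (fun ω : ℂ => ω + 1) '' V ⊆ V)
    (habs : ∀ K : Set ℂ, IsCompact K → ∃ n : ℕ, (fun ω : ℂ => ω + 1)^[n] '' K ⊆ V)
    (ω : ℂ) :
    ∃ (m : ℕ) (d : ℕ → ℝ), (∀ n, 0 < d n) ∧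
      Filter.Tendsto d Filter.atTop Filter.atTop ∧
      ∀ n, m ≤ n → Metric.ball (ω + (n : ℂ)) (d n) ⊆ V := by
  set fT : ℂ → ℂ := fun ω : ℂ => ω + 1 with hfT
  have hiter : ∀ (n : ℕ) (z : ℂ), fT^[n] z = z + n := by
    intro n
    induction n with
    | zero => simp
    | succ k ih =>
      intro z
      rw [Function.iterate_succ_apply', ih]
      simp [hfT]
      push_cast
      ring
  have hVt : ∀ t : ℕ, fT^[t] '' V ⊆ V := by
    intro t
    induction t with
    | zero => simp
    | succ k ih =>
      rw [Function.iterate_succ, Set.image_comp]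
      exact (Set.image_mono hinv).trans ih
  -- key: for each k, eventually the closed ball of radius k+1 around ω+n is in V
  have key : ∀ k : ℕ, ∃ n₀ : ℕ, ∀ n : ℕ, n₀ ≤ n →
      Metric.closedBall (ω + (n : ℂ)) ((k : ℝ) + 1) ⊆ V := by
    intro k
    obtain ⟨n₀, hn₀⟩ := habs (Metric.closedBall ω ((k : ℝ) + 1))
      (isCompact_closedBall _ _)
    refine ⟨n₀, fun n hn z hz => ?_⟩
    obtain ⟨t, rfl⟩ := Nat.exists_eq_add_of_le hn
    have hz' : z - (n₀ + t : ℕ) ∈ Metric.closedBall ω ((k : ℝ) + 1) := by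
      rw [Metric.mem_closedBall, Complex.dist_eq] at hz ⊢
      have : z - (n₀ + t : ℕ) - ω = z - (ω + (n₀ + t : ℕ)) := by ring
      rw [this]; exact hz
    have hmem : z ∈ fT^[n₀ + t] '' Metric.closedBall ω ((k : ℝ) + 1) := by
      refine ⟨z - (n₀ + t : ℕ), hz', ?_⟩
      rw [hiter]; ring
    have : fT^[n₀ + t] '' Metric.closedBall ω ((k : ℝ) + 1) ⊆ V := by
      rw [add_comm n₀ t, Function.iterate_add, Set.image_comp]
      exact (Set.image_mono hn₀).trans (hVt t)
    exact this hmem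
  choose M hM using key
  -- strictly increasing majorant of M
  set N : ℕ → ℕ := fun k => Nat.rec (M 0) (fun k ih => max (M (k + 1)) (ih + 1)) k
    with hN
  have hNM : ∀ k, M k ≤ N k := by
    intro k; cases k with
    | zero => exact le_refl _
    | succ k => exact le_max_left _ _
  set P : ℕ → ℕ → Prop := fun n k => N k ≤ n with hP
  have hPdec : ∀ n, DecidablePred (P n) := fun n k => Nat.decLe _ _
  refine ⟨N 0, fun n => (Nat.findGreatest (P n) n : ℝ) + 1, fun n => by positivity,
    ?_, ?_⟩
  · rw [Filter.tendsto_atTop]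
    intro b
    obtain ⟨k, hk⟩ := exists_nat_ge b
    filter_upwards [Filter.eventually_ge_atTop (max k (N k))] with n hn
    have h1 : k ≤ Nat.findGreatest (P n) n :=
      Nat.le_findGreatest ((le_max_left _ _).trans hn) ((le_max_right _ _).trans hn)
    have : (k : ℝ) ≤ (Nat.findGreatest (P n) n : ℝ) := by exact_mod_cast h1
    linarith
  · intro n hn
    set j := Nat.findGreatest (P n) n with hj
    have hPj : P n j := Nat.findGreatest_spec (Nat.zero_le n) (show P n 0 from hn)
    have hMj : M j ≤ n := (hNM j).trans hPj
    exact (Metric.ball_subset_closedBall).trans (hM j n hMj)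
end

section
/- Let U ⊂ ℂ be a domain and f : U → U holomorphic. Suppose γ ⊂ U is a closed curve such that for all n ≥ n₀ and all z in the image of γ, |f^{n+1}(z) - f^n(z)| < (1/2)·dist(f^n(z), ∂U). Then for every v ∈ ℂ \ U and every n' ≥ n ≥ n₀, the winding number of f^n ∘ γ around v equals the winding number of f^{n'} ∘ γ around v; in particular, v lies in a bounded complementary component of f^n(γ) if and only if it lies in a bounded complementary component of f^{n'}(γ). -/
set_option maxHeartbeats 1000000

/-- `w` is the winding number of the closed curve `c : [0,1] → ℂ` around `v`, expressed via
a continuous logarithm lift: `c(t) - v = exp(ℓ(t))` and `ℓ(1) - ℓ(0) = 2πi·w`. -/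
def IsWindingNumber (c : ℝ → ℂ) (v : ℂ) (w : ℤ) : Prop :=
  ∃ ℓ : ℝ → ℂ, ContinuousOn ℓ (Set.Icc 0 1) ∧
    (∀ t ∈ Set.Icc (0 : ℝ) 1, c t - v = Complex.exp (ℓ t)) ∧
    ℓ 1 - ℓ 0 = 2 * Real.pi * Complex.I * (w : ℂ)

/-- If a point of `U` is closer to the frontier than to `v`, then `v ∈ U`. Equivalently,
for `x ∈ U` (open) and `v ∉ U`, `infDist x (frontier U) ≤ dist x v`. -/
lemma infDist_frontier_le_dist (U : Set ℂ) (hU : IsOpen U) {x v : ℂ}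
    (hx : x ∈ U) (hv : v ∉ U) : Metric.infDist x (frontier U) ≤ dist x v := by
  by_contra h
  push_neg at h
  have hball : Metric.closedBall x (dist x v) ⊆ (frontier U)ᶜ := by
    intro y hy hyf
    rw [Metric.mem_closedBall] at hy
    have h1 : Metric.infDist x (frontier U) ≤ dist x y := Metric.infDist_le_dist_of_mem hyf
    rw [dist_comm y x] at hy
    linarith
  have hcompl : (frontier U)ᶜ = U ∪ (closure U)ᶜ := by
    rw [frontier_eq_closure_inter_closure, hU.isClosed_compl.closure_eq, Set.compl_inter,
      compl_compl, Set.union_comm]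
  have hsub : Metric.closedBall x (dist x v) ⊆ U := by
    apply (convex_closedBall x (dist x v)).isPreconnected.subset_left_of_subset_union
      hU isClosed_closure.isOpen_compl
      (disjoint_compl_right.mono_left subset_closure)
      (hcompl ▸ hball)
    exact ⟨x, Metric.mem_closedBall_self dist_nonneg, hx⟩
  exact hv (hsub (by simp [Metric.mem_closedBall, dist_comm]))

/-- Dog-on-a-leash: if `c₁` stays closer to `c₀` than `c₀` is to `v`, along closed curves,
then the winding number of `c₀` around `v` is also a winding number of `c₁` around `v`. -/
lemma leash (c₀ c₁ : ℝ → ℂ) (v : ℂ) (w : ℤ)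
    (h₀ : ContinuousOn c₀ (Set.Icc 0 1)) (h₁ : ContinuousOn c₁ (Set.Icc 0 1))
    (hcl₀ : c₀ 0 = c₀ 1) (hcl₁ : c₁ 0 = c₁ 1)
    (hlt : ∀ t ∈ Set.Icc (0 : ℝ) 1,
      ‖c₁ t - c₀ t‖ < ‖c₀ t - v‖) :
    IsWindingNumber c₀ v w → IsWindingNumber c₁ v w := by
  rintro ⟨ℓ, hℓc, hℓe, hℓw⟩
  set r : ℝ → ℂ := fun t => (c₁ t - v) / (c₀ t - v) with hr
  have hne : ∀ t ∈ Set.Icc (0 : ℝ) 1, c₀ t - v ≠ 0 := by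
    intro t ht h0
    have := hlt t ht
    rw [h0, norm_zero] at this
    exact (norm_nonneg _).not_gt this
  have hslit : ∀ t ∈ Set.Icc (0 : ℝ) 1, r t ∈ Complex.slitPlane := by
    intro t ht
    have hne' := hne t ht
    have h1 : ‖r t - 1‖ < 1 := by
      have : r t - 1 = (c₁ t - c₀ t) / (c₀ t - v) := by
        rw [hr]
        rw [div_sub_one hne']
        congr 1
        ring
      rw [this, norm_div]
      exact (div_lt_one ((norm_nonneg _).trans_lt (hlt t ht))).mpr (hlt t ht)
    rw [Complex.mem_slitPlane_iff]
    left
    have h2 : |(r t - 1).re| < 1 := lt_of_le_of_lt (Complex.abs_re_le_norm _) h1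
    have : (r t).re = 1 + (r t - 1).re := by simp
    rw [this]
    cases abs_lt.mp h2 with
    | intro hl hr => linarith
  have hrne : ∀ t ∈ Set.Icc (0 : ℝ) 1, r t ≠ 0 := fun t ht =>
    Complex.slitPlane_ne_zero (hslit t ht)
  refine ⟨fun t => ℓ t + Complex.log (r t), ?_, ?_, ?_⟩
  · apply hℓc.add
    intro t ht
    have hrc : ContinuousWithinAt r (Set.Icc 0 1) t :=
      ((h₁.sub continuousOn_const).div (h₀.sub continuousOn_const) hne) t ht
    exact (continuousAt_clog (hslit t ht)).comp_continuousWithinAt hrc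
  · intro t ht
    rw [Complex.exp_add, ← hℓe t ht, Complex.exp_log (hrne t ht), hr, mul_div_assoc',
      mul_comm, ← mul_div_assoc', div_self (hne t ht), mul_one]
  · have hr01 : r 1 = r 0 := by simp [hr, hcl₀, hcl₁]
    show ℓ 1 + Complex.log (r 1) - (ℓ 0 + Complex.log (r 0)) = _
    rw [hr01, ← hℓw]
    ring

/-- eq. (4.2) in the proof of Theorem B. If along a closed curve `γ ⊂ U`
the iterates satisfy `|f^{n+1}(z) - f^n(z)| < dist(f^n(z), ∂U)/2` for all `n ≥ n₀`, then for
every `v ∉ U` the winding number of `f^n ∘ γ` around `v` is the same for all `n ≥ n₀`. -/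
theorem stmt9 (U : Set ℂ) (hopen : IsOpen U) (hconn : IsConnected U)
    (f : ℂ → ℂ) (hf : DifferentiableOn ℂ f U) (hmaps : Set.MapsTo f U U)
    (γ : ℝ → ℂ) (hγc : ContinuousOn γ (Set.Icc 0 1)) (hγcl : γ 0 = γ 1)
    (hγU : ∀ t ∈ Set.Icc (0 : ℝ) 1, γ t ∈ U)
    (n₀ : ℕ)
    (hstep : ∀ n : ℕ, n₀ ≤ n → ∀ t ∈ Set.Icc (0 : ℝ) 1,
      ‖f^[n + 1] (γ t) - f^[n] (γ t)‖ <
        (1 / 2) * Metric.infDist (f^[n] (γ t)) (frontier U)) :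
    ∀ v : ℂ, v ∉ U → ∀ n n' : ℕ, n₀ ≤ n → n ≤ n' → ∀ w : ℤ,
      IsWindingNumber (fun t => f^[n] (γ t)) v w ↔
        IsWindingNumber (fun t => f^[n'] (γ t)) v w := by
  intro v hv n n' hn hnn' w
  -- membership and continuity of iterates along γ
  have hmem : ∀ m : ℕ, ∀ t ∈ Set.Icc (0 : ℝ) 1, f^[m] (γ t) ∈ U := fun m t ht =>
    hmaps.iterate m (hγU t ht)
  have hcont : ∀ m : ℕ, ContinuousOn (fun t => f^[m] (γ t)) (Set.Icc 0 1) := by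
    intro m
    induction m with
    | zero => simpa using hγc
    | succ k ih =>
      have : (fun t => f^[k + 1] (γ t)) = fun t => f (f^[k] (γ t)) := by
        funext t; rw [Function.iterate_succ_apply']
      rw [this]
      exact hf.continuousOn.comp ih (fun t ht => hmem k t ht)
  -- one step of the dog-on-a-leash argument
  have key : ∀ m : ℕ, n₀ ≤ m →
      (IsWindingNumber (fun t => f^[m] (γ t)) v w ↔
        IsWindingNumber (fun t => f^[m + 1] (γ t)) v w) := by
    intro m hm
    have hbound : ∀ t ∈ Set.Icc (0 : ℝ) 1,
        ‖f^[m + 1] (γ t) - f^[m] (γ t)‖ <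
          (1 / 2) * ‖f^[m] (γ t) - v‖ := by
      intro t ht
      refine lt_of_lt_of_le (hstep m hm t ht) ?_
      have := infDist_frontier_le_dist U hopen (hmem m t ht) hv
      rw [Complex.dist_eq] at this
      linarith
    have hcl : ∀ k : ℕ, f^[k] (γ 0) = f^[k] (γ 1) := fun k => by rw [hγcl]
    constructor
    · apply leash _ _ v w (hcont m) (hcont (m + 1)) (hcl m) (hcl (m + 1))
      intro t ht
      have h1 := hbound t ht
      have h2 : (0 : ℝ) ≤ ‖f^[m + 1] (γ t) - f^[m] (γ t)‖ := by positivity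
      linarith
    · apply leash _ _ v w (hcont (m + 1)) (hcont m) (hcl (m + 1)) (hcl m)
      intro t ht
      have h1 := hbound t ht
      have h2 : ‖f^[m] (γ t) - v‖ - ‖f^[m + 1] (γ t) - f^[m] (γ t)‖
          ≤ ‖f^[m + 1] (γ t) - v‖ := by
        have := norm_sub_norm_le (f^[m] (γ t) - v) (f^[m] (γ t) - f^[m + 1] (γ t))
        have heq : f^[m] (γ t) - v - (f^[m] (γ t) - f^[m + 1] (γ t)) = f^[m + 1] (γ t) - v := by
          ring
        rw [heq] at this
        have habs : ‖f^[m] (γ t) - f^[m + 1] (γ t)‖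
            = ‖f^[m + 1] (γ t) - f^[m] (γ t)‖ := by
          rw [norm_sub_rev]
        linarith [habs ▸ this]
      have heq2 : ‖f^[m] (γ t) - f^[m + 1] (γ t)‖
          = ‖f^[m + 1] (γ t) - f^[m] (γ t)‖ := by
        rw [norm_sub_rev]
      rw [heq2]
      have h1 := hbound t ht
      linarith
  -- induction from n to n'
  induction n' with
  | zero =>
    have : n = 0 := Nat.le_zero.mp hnn'
    rw [this]
  | succ k ih =>
    rcases Nat.lt_or_ge n (k + 1) with h | h
    · have hk : n ≤ k := Nat.lt_succ_iff.mp h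
      exact (ih hk).trans (key k (le_trans hn hk))
    · have : n = k + 1 := le_antisymm hnn' h
      rw [this]
end

section
/- Let (a_m)_{m ∈ ℤ} be complex numbers with Σ_{m ∈ ℤ} |a_m| · (4/ε² + (16/ε²)·Σ_{k≠0} 1/k²) < ε/2 for some ε > 0 with ε < 1/12. Define e(z) = Σ_{m ∈ ℤ} a_m/(z - m)². Suppose z₀, …, z_n ∈ ℂ satisfy dist(z₀, ℤ) ≥ ε (Euclidean distance from z₀ to the set of integers) and |z_k - z₀ - k| < ε/2 for all k = 0, …, n. Then Σ_{k=0}^n |e(z_k)| < ε/2. -/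
set_option maxHeartbeats 1000000


/-- Lemma 5.2, case (ii) with `P = ℤ`. With
`e(z) = Σ_{m ∈ ℤ} a_m/(z - m)²` and `Σ|a_m|·(4/ε² + (16/ε²)·Σ_{k≠0} 1/k²) < ε/2`: if
`dist(z₀, ℤ) ≥ ε` and `|z_k - z₀ - k| < ε/2` for `k = 0, …, n`, then `Σ_k |e(z_k)| < ε/2`. -/
theorem stmt11 (a : ℤ → ℂ) (ε : ℝ) (hε0 : 0 < ε) (hεs : ε < 1 / 12)
    (hsum : Summable fun m : ℤ => ‖a m‖)
    (hbound : (∑' m : ℤ, ‖a m‖) *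
      (4 / ε ^ 2 + (16 / ε ^ 2) * ∑' k : {k : ℤ // k ≠ 0}, 1 / ((k : ℤ) : ℝ) ^ 2) < ε / 2)
    (n : ℕ) (z : ℕ → ℂ)
    (hz0 : ε ≤ Metric.infDist (z 0) (Set.range fun m : ℤ => (m : ℂ)))
    (hzk : ∀ k ≤ n, ‖z k - z 0 - (k : ℂ)‖ < ε / 2) :
    ∑ k ∈ Finset.range (n + 1),
      ‖∑' m : ℤ, a m / (z k - (m : ℂ)) ^ 2‖ < ε / 2 := by
  classical
  set k₀ : ℤ := ⌊(z 0).re⌋ with hk₀def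
  set S : ℝ := ∑' k : {k : ℤ // k ≠ 0}, 1 / ((k : ℤ) : ℝ) ^ 2 with hSdef
  have hSf : Summable (fun i : ℤ => 1 / (i : ℝ) ^ 2) := by
    exact_mod_cast Real.summable_one_div_int_pow.2 one_lt_two
  -- the indicator version of 1/i²
  set g : ℤ → ℝ := Set.indicator {i : ℤ | i ≠ 0} (fun i : ℤ => 1 / (i : ℝ) ^ 2) with hgdef
  have hg0 : ∀ i, 0 ≤ g i := by
    intro i
    apply Set.indicator_nonneg
    intro i _
    positivity
  have hgsum : Summable g := hSf.indicator _
  have hgS : ∑' i : ℤ, g i = S := by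
    rw [hSdef, ← tsum_subtype]
    rfl
  have hgval : ∀ i : ℤ, i ≠ 0 → g i = 1 / (i : ℝ) ^ 2 := by
    intro i hi
    simp [hgdef, Set.indicator, hi]
  -- bound (A): all denominators are at least ε/2 in absolute value
  have hA : ∀ k ≤ n, ∀ m : ℤ, ε / 2 ≤ ‖z k - (m : ℂ)‖ := by
    intro k hk m
    have h1 : ε ≤ ‖z 0 + k - m‖ := by
      have hmem : ((m - (k : ℤ) : ℤ) : ℂ) ∈ Set.range fun m : ℤ => (m : ℂ) :=
        ⟨m - (k : ℤ), rfl⟩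
      have := Metric.infDist_le_dist_of_mem (x := z 0) hmem
      rw [Complex.dist_eq] at this
      have h2 : z 0 - ((m - (k : ℤ) : ℤ) : ℂ) = z 0 + k - m := by push_cast; ring
      rw [h2] at this
      linarith
    have h2 := hzk k hk
    have h3 : z 0 + k - m = (z k - m) - (z k - z 0 - k) := by ring
    rw [h3] at h1
    have h4 : ‖(z k - m) - (z k - z 0 - k)‖ ≤
        ‖z k - m‖ + ‖z k - z 0 - k‖ := by
      simpa using norm_sub_le (z k - (m : ℂ)) (z k - z 0 - (k : ℂ))
    linarith
  -- bound (B): off-diagonal denominators grow linearly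
  have hB : ∀ k ≤ n, ∀ m : ℤ, (k : ℤ) + k₀ ≠ m →
      ε / 4 * |(((k : ℤ) + k₀ - m : ℤ) : ℝ)| ≤ ‖z k - (m : ℂ)‖ := by
    intro k hk m hne
    set j : ℤ := (k : ℤ) + k₀ - m with hjdef
    have hj : j ≠ 0 := by omega
    by_cases hj2 : 2 ≤ |j|
    · -- large j case: use the real part
      have hj2' : (2 : ℝ) ≤ |(j : ℝ)| := by
        rw [← Int.cast_abs]; exact_mod_cast hj2
      have hfl1 : ((k₀ : ℤ) : ℝ) ≤ (z 0).re := by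
        rw [hk₀def]; exact_mod_cast Int.floor_le (z 0).re
      have hfl2 : (z 0).re < ((k₀ : ℤ) : ℝ) + 1 := by
        rw [hk₀def]; exact_mod_cast Int.lt_floor_add_one (z 0).re
      set r : ℝ := (z 0).re - (k₀ : ℝ) with hrdef
      have hr0 : 0 ≤ r := by rw [hrdef]; linarith
      have hr1 : r < 1 := by rw [hrdef]; linarith
      set δ : ℝ := (z k).re - (z 0).re - k with hδdef
      have hδ : |δ| ≤ ε / 2 := by
        have h1 : |(z k - z 0 - (k : ℂ)).re| ≤ ‖z k - z 0 - (k : ℂ)‖ :=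
          Complex.abs_re_le_norm _
        have h2 : (z k - z 0 - (k : ℂ)).re = δ := by
          rw [hδdef]
          simp [Complex.sub_re]
        rw [h2] at h1
        have := hzk k hk
        linarith
      have hre : (z k - (m : ℂ)).re = (j : ℝ) + r + δ := by
        rw [hrdef, hδdef, hjdef]
        simp only [Complex.sub_re, Complex.intCast_re]
        push_cast
        ring
      have hrele : |(z k - (m : ℂ)).re| ≤ ‖z k - (m : ℂ)‖ :=
        Complex.abs_re_le_norm _
      rw [hre] at hrele
      have key : ε / 4 * |(j : ℝ)| ≤ |(j : ℝ) + r + δ| := by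
        obtain ⟨hδ1, hδ2⟩ := abs_le.mp hδ
        rcases le_or_gt 0 ((j : ℝ)) with hpos | hneg
        · have hjr : 2 ≤ (j : ℝ) := by rwa [abs_of_nonneg hpos] at hj2'
          have hsum : 0 ≤ (j : ℝ) + r + δ := by linarith
          rw [abs_of_nonneg hpos, abs_of_nonneg hsum]
          nlinarith [mul_nonneg (show (0:ℝ) ≤ (j : ℝ) - 2 by linarith)
            (show (0:ℝ) ≤ 1 - ε / 4 by linarith)]
        · have hjr : (j : ℝ) ≤ -2 := by
            rw [abs_of_neg hneg] at hj2'; linarith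
          have hsum : (j : ℝ) + r + δ < 0 := by linarith
          rw [abs_of_neg hneg, abs_of_neg hsum]
          nlinarith [mul_nonneg (show (0:ℝ) ≤ -(j : ℝ) - 2 by linarith)
            (show (0:ℝ) ≤ 1 - ε / 4 by linarith)]
      calc ε / 4 * |(j : ℝ)| ≤ |(j : ℝ) + r + δ| := key
        _ ≤ ‖z k - (m : ℂ)‖ := hrele
    · -- |j| = 1 case
      have h1le : 1 ≤ |j| := Int.one_le_abs hj
      have h2lt : |j| < 2 := not_le.mp hj2
      have hj1 : |j| = 1 := le_antisymm (by linarith) h1le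
      have hj1' : |(j : ℝ)| = 1 := by
        rw [← Int.cast_abs, hj1]; norm_num
      rw [hj1', mul_one]
      have := hA k hk m
      linarith
  -- the summand bound functions
  set F : ℕ → ℤ → ℝ := fun k m => ‖a m‖ / ‖z k - (m : ℂ)‖ ^ 2
    with hFdef
  have hF0 : ∀ k m, 0 ≤ F k m := by intro k m; positivity
  have hFle : ∀ k ≤ n, ∀ m : ℤ, F k m ≤ ‖a m‖ * (4 / ε ^ 2) := by
    intro k hk m
    have h1 := hA k hk m
    have h2 : (0 : ℝ) < ε / 2 := by linarith
    have h3 : F k m ≤ ‖a m‖ / (ε / 2) ^ 2 := by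
      show ‖a m‖ / ‖z k - (m : ℂ)‖ ^ 2 ≤
        ‖a m‖ / (ε / 2) ^ 2
      gcongr
    have h4 : ‖a m‖ / (ε / 2) ^ 2 = ‖a m‖ * (4 / ε ^ 2) := by
      field_simp
      norm_num
    rw [h4] at h3
    exact h3
  have hFsummable : ∀ k ≤ n, Summable (F k) := by
    intro k hk
    exact Summable.of_nonneg_of_le (hF0 k) (hFle k hk) (hsum.mul_right _)
  -- per-m bound
  have key : ∀ m : ℤ, ∑ k ∈ Finset.range (n + 1), F k m ≤
      ‖a m‖ * (4 / ε ^ 2 + 16 / ε ^ 2 * S) := by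
    intro m
    set s := Finset.range (n + 1) with hsdef
    have hsplit : ∑ k ∈ s, F k m =
        (∑ k ∈ s.filter (fun k : ℕ => (k : ℤ) + k₀ = m), F k m) +
        ∑ k ∈ s.filter (fun k : ℕ => ¬((k : ℤ) + k₀ = m)), F k m :=
      (Finset.sum_filter_add_sum_filter_not s (fun k : ℕ => (k : ℤ) + k₀ = m)
        (fun k : ℕ => F k m)).symm
    have hmem : ∀ k ∈ s, k ≤ n := by
      intro k hk
      exact Nat.lt_succ_iff.mp (Finset.mem_range.mp hk)
    have h1 : ∑ k ∈ s.filter (fun k : ℕ => (k : ℤ) + k₀ = m), F k m ≤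
        ‖a m‖ * (4 / ε ^ 2) := by
      have hcard : (s.filter (fun k : ℕ => (k : ℤ) + k₀ = m)).card ≤ 1 := by
        apply Finset.card_le_one.2
        intro x hx y hy
        simp only [Finset.mem_filter] at hx hy
        omega
      have hb : ∀ k ∈ s.filter (fun k : ℕ => (k : ℤ) + k₀ = m),
          F k m ≤ ‖a m‖ * (4 / ε ^ 2) := by
        intro k hk
        exact hFle k (hmem k (Finset.mem_filter.mp hk).1) m
      calc ∑ k ∈ s.filter (fun k : ℕ => (k : ℤ) + k₀ = m), F k m
          ≤ (s.filter (fun k : ℕ => (k : ℤ) + k₀ = m)).card •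
            (‖a m‖ * (4 / ε ^ 2)) := Finset.sum_le_card_nsmul _ _ _ hb
        _ ≤ 1 * (‖a m‖ * (4 / ε ^ 2)) := by
            rw [nsmul_eq_mul]
            apply mul_le_mul_of_nonneg_right _ (by positivity)
            exact_mod_cast hcard
        _ = ‖a m‖ * (4 / ε ^ 2) := one_mul _
    have h2 : ∑ k ∈ s.filter (fun k : ℕ => ¬((k : ℤ) + k₀ = m)), F k m ≤
        ‖a m‖ * (16 / ε ^ 2) * S := by
      set t := s.filter (fun k : ℕ => ¬((k : ℤ) + k₀ = m)) with htdef
      have hstep : ∀ k ∈ t, F k m ≤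
          ‖a m‖ * (16 / ε ^ 2) * g ((k : ℤ) + k₀ - m) := by
        intro k hk
        simp only [htdef, Finset.mem_filter] at hk
        have hkn : k ≤ n := hmem k hk.1
        have hne : (k : ℤ) + k₀ ≠ m := hk.2
        have hj : ((k : ℤ) + k₀ - m) ≠ 0 := by omega
        have hjR : (((k : ℤ) + k₀ - m : ℤ) : ℝ) ≠ 0 := Int.cast_ne_zero.mpr hj
        have hb := hB k hkn m hne
        have hpos : (0 : ℝ) < ε / 4 * |(((k : ℤ) + k₀ - m : ℤ) : ℝ)| := by
          have : |(((k : ℤ) + k₀ - m : ℤ) : ℝ)| > 0 := abs_pos.mpr hjR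
          positivity
        have h3 : F k m ≤
            ‖a m‖ / (ε / 4 * |(((k : ℤ) + k₀ - m : ℤ) : ℝ)|) ^ 2 := by
          show ‖a m‖ / ‖z k - (m : ℂ)‖ ^ 2 ≤
            ‖a m‖ / (ε / 4 * |(((k : ℤ) + k₀ - m : ℤ) : ℝ)|) ^ 2
          gcongr
        have h4 : ‖a m‖ / (ε / 4 * |(((k : ℤ) + k₀ - m : ℤ) : ℝ)|) ^ 2 =
            ‖a m‖ * (16 / ε ^ 2) * (1 / (((k : ℤ) + k₀ - m : ℤ) : ℝ) ^ 2) := by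
          rw [mul_pow, sq_abs]
          field_simp
          norm_num
        rw [hgval _ hj]
        linarith [h3, h4.le]
      have hinj : ∀ x ∈ t, ∀ y ∈ t,
          ((x : ℤ) + k₀ - m) = ((y : ℤ) + k₀ - m) → x = y := by
        intro x _ y _ h
        omega
      have himg : ∑ k ∈ t, g ((k : ℤ) + k₀ - m) =
          ∑ i ∈ t.image (fun k : ℕ => (k : ℤ) + k₀ - m), g i :=
        (Finset.sum_image hinj).symm
      have htsum : ∑ i ∈ t.image (fun k : ℕ => (k : ℤ) + k₀ - m), g i ≤ ∑' i : ℤ, g i :=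
        Summable.sum_le_tsum _ (fun i _ => hg0 i) hgsum
      calc ∑ k ∈ t, F k m
          ≤ ∑ k ∈ t, ‖a m‖ * (16 / ε ^ 2) * g ((k : ℤ) + k₀ - m) :=
            Finset.sum_le_sum hstep
        _ = ‖a m‖ * (16 / ε ^ 2) * ∑ k ∈ t, g ((k : ℤ) + k₀ - m) := by
            rw [Finset.mul_sum]
        _ ≤ ‖a m‖ * (16 / ε ^ 2) * S := by
            apply mul_le_mul_of_nonneg_left _ (by positivity)
            rw [himg, ← hgS]
            exact htsum
    calc ∑ k ∈ s, F k m = _ + _ := hsplit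
      _ ≤ ‖a m‖ * (4 / ε ^ 2) + ‖a m‖ * (16 / ε ^ 2) * S :=
          add_le_add h1 h2
      _ = ‖a m‖ * (4 / ε ^ 2 + 16 / ε ^ 2 * S) := by ring
  -- assemble everything
  have step1 : ∑ k ∈ Finset.range (n + 1), ‖∑' m : ℤ, a m / (z k - (m : ℂ)) ^ 2‖ ≤
      ∑ k ∈ Finset.range (n + 1), ∑' m : ℤ, F k m := by
    apply Finset.sum_le_sum
    intro k hk
    have hkn : k ≤ n := Nat.lt_succ_iff.mp (Finset.mem_range.mp hk)
    have hnorm : ∀ m : ℤ, ‖a m / (z k - (m : ℂ)) ^ 2‖ = F k m := by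
      intro m
      simp [hFdef, norm_div, norm_pow]
    have hsummable : Summable fun m : ℤ => ‖a m / (z k - (m : ℂ)) ^ 2‖ := by
      rw [show (fun m : ℤ => ‖a m / (z k - (m : ℂ)) ^ 2‖) = F k from funext hnorm]
      exact hFsummable k hkn
    calc ‖∑' m : ℤ, a m / (z k - (m : ℂ)) ^ 2‖
        = ‖∑' m : ℤ, a m / (z k - (m : ℂ)) ^ 2‖ := rfl
      _ ≤ ∑' m : ℤ, ‖a m / (z k - (m : ℂ)) ^ 2‖ := norm_tsum_le_tsum_norm hsummable
      _ = ∑' m : ℤ, F k m := by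
          exact tsum_congr hnorm
  have step2 : ∑ k ∈ Finset.range (n + 1), ∑' m : ℤ, F k m =
      ∑' m : ℤ, ∑ k ∈ Finset.range (n + 1), F k m := by
    exact (Summable.tsum_finsetSum fun k hk =>
      hFsummable k (Nat.lt_succ_iff.mp (Finset.mem_range.mp hk))).symm
  have hC : Summable fun m : ℤ => ‖a m‖ * (4 / ε ^ 2 + 16 / ε ^ 2 * S) :=
    hsum.mul_right _
  have step3 : ∑' m : ℤ, ∑ k ∈ Finset.range (n + 1), F k m ≤
      ∑' m : ℤ, ‖a m‖ * (4 / ε ^ 2 + 16 / ε ^ 2 * S) := by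
    apply Summable.tsum_le_tsum key _ hC
    exact Summable.of_nonneg_of_le
      (fun m => Finset.sum_nonneg fun k _ => hF0 k m) key hC
  have step4 : ∑' m : ℤ, ‖a m‖ * (4 / ε ^ 2 + 16 / ε ^ 2 * S) =
      (∑' m : ℤ, ‖a m‖) * (4 / ε ^ 2 + 16 / ε ^ 2 * S) :=
    tsum_mul_right
  calc ∑ k ∈ Finset.range (n + 1), ‖∑' m : ℤ, a m / (z k - (m : ℂ)) ^ 2‖
      ≤ ∑ k ∈ Finset.range (n + 1), ∑' m : ℤ, F k m := step1
    _ = ∑' m : ℤ, ∑ k ∈ Finset.range (n + 1), F k m := step2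
    _ ≤ ∑' m : ℤ, ‖a m‖ * (4 / ε ^ 2 + 16 / ε ^ 2 * S) := step3
    _ = (∑' m : ℤ, ‖a m‖) * (4 / ε ^ 2 + 16 / ε ^ 2 * S) := step4
    _ < ε / 2 := hbound
end

section
/- Let U ⊆ ℂ be a domain whose complement ℂ \ U has exactly one point ζ₀. Then U is not hyperbolic, i.e. the complement of U in ℂ contains at most one point. Consequently: if U ⊂ ℂ is hyperbolic, f : U → U is holomorphic with f^n → ∞ almost uniformly, ζ₀ ∈ ℂ is an isolated boundary point of U to which f extends holomorphically with f(ζ₀) = ζ₀, and D is a Jordan disc around ζ₀ with D \ {ζ₀} ⊆ U and ∂D ⊆ U, then ⋃_{n≥0} f^n(D \ {ζ₀}) ⊇ ℂ \ {ζ₀} leads to a contradiction; hence f has no isolated boundary fixed points (other than possibly ∞). -/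
/-- first paragraph of the proof of Theorem B. First: if the complement
of a domain `U ⊆ ℂ` is exactly one point, then `U` is not hyperbolic. Consequently, under
the hypotheses of Theorem B, `f` has no isolated boundary fixed points in `ℂ`: any
holomorphic extension `F` of `f` to `U ∪ {ζ₀}` over an isolated boundary point `ζ₀`
satisfies `F ζ₀ ≠ ζ₀`. -/
theorem stmt15 :
    (∀ (U : Set ℂ) (ζ₀ : ℂ), Uᶜ = {ζ₀} →
      ¬ ∃ a b : ℂ, a ∈ Uᶜ ∧ b ∈ Uᶜ ∧ a ≠ b) ∧
    ∀ (U : Set ℂ), IsOpen U → IsConnected U →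
      (∃ a b : ℂ, a ∉ U ∧ b ∉ U ∧ a ≠ b) →
      ∀ f : ℂ → ℂ, DifferentiableOn ℂ f U → Set.MapsTo f U U →
      (∀ K : Set ℂ, K ⊆ U → IsCompact K → ∀ M : ℝ,
        ∃ N : ℕ, ∀ n ≥ N, ∀ z ∈ K, M < ‖f^[n] z‖) →
      (¬ ∃ R : ℝ, ∀ z : ℂ, R < ‖z‖ → z ∈ U) →
      ∀ ζ₀ : ℂ, ζ₀ ∉ U →
      (∃ r > 0, ∀ w : ℂ, w ≠ ζ₀ → dist w ζ₀ < r → w ∈ U) →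
      ∀ F : ℂ → ℂ, DifferentiableOn ℂ F (U ∪ {ζ₀}) →
      (∀ z ∈ U, F z = f z) → F ζ₀ ≠ ζ₀ := by
  constructor
  · rintro U ζ₀ hc ⟨a, b, ha, hb, hab⟩
    rw [hc] at ha hb
    exact hab (ha.trans hb.symm)
  · rintro U hUopen hUconn _ f hf hmaps hK hRnot ζ₀ hζ₀ ⟨r, hr, hU'⟩ F hFdiff hFf hF0
    -- F maps U ∪ {ζ₀} into itself
    have hFmaps : Set.MapsTo F (U ∪ {ζ₀}) (U ∪ {ζ₀}) := by
      rintro z (hz | hz)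
      · exact Or.inl (by rw [hFf z hz]; exact hmaps hz)
      · simp only [Set.mem_singleton_iff] at hz
        subst hz; exact Or.inr (by simp [hF0])
    -- iterates of F are differentiable on U ∪ {ζ₀}
    have hFn_diff : ∀ n, DifferentiableOn ℂ (F^[n]) (U ∪ {ζ₀}) := by
      intro n
      induction n with
      | zero => simpa using differentiableOn_id
      | succ n ih =>
        rw [Function.iterate_succ']
        exact hFdiff.comp ih (hFmaps.iterate n)
    -- F^[n] = f^[n] on U
    have hFfn : ∀ n, ∀ z ∈ U, F^[n] z = f^[n] z := by
      intro n
      induction n with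
      | zero => intro z _; simp
      | succ n ih =>
        intro z hz
        rw [Function.iterate_succ', Function.iterate_succ']
        simp only [Function.comp_apply]
        rw [ih z hz, hFf _ ((hmaps.iterate n) hz)]
    have hFnfix : ∀ n, F^[n] ζ₀ = ζ₀ := fun n => Function.iterate_fixed hF0 n
    set r' := r / 2 with hr'
    have hr'pos : (0 : ℝ) < r' := by positivity
    have hSU : Metric.sphere ζ₀ r' ⊆ U := by
      intro z hz
      rw [Metric.mem_sphere] at hz
      refine hU' z ?_ (by rw [hz]; linarith)
      intro h; subst h; simp at hz; linarith
    have hCsub : Metric.closedBall ζ₀ r' ⊆ U ∪ {ζ₀} := by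
      intro z hz
      rw [Metric.mem_closedBall] at hz
      by_cases h : z = ζ₀
      · exact Or.inr (by simp [h])
      · exact Or.inl (hU' z h (lt_of_le_of_lt hz (by linarith)))
    -- main claim: every w ≠ ζ₀ lies in U
    have hmain : ∀ w : ℂ, w ≠ ζ₀ → w ∈ U := by
      intro w hw
      by_contra hwU
      set M : ℝ := ‖w‖ + ‖ζ₀ - w‖ + 1 with hM
      obtain ⟨N, hN⟩ := hK (Metric.sphere ζ₀ r') hSU (isCompact_sphere ζ₀ r') M
      have h1 : ∀ z ∈ Metric.sphere ζ₀ r', M < ‖F^[N] z‖ := by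
        intro z hz
        rw [hFfn N z (hSU hz)]
        exact hN N le_rfl z hz
      have h2 : ∀ z ∈ Metric.closedBall ζ₀ r', F^[N] z ≠ w := by
        intro z hz h
        rcases (hFmaps.iterate N) (hCsub hz) with h' | h'
        · rw [h] at h'; exact hwU h'
        · simp only [Set.mem_singleton_iff] at h'; rw [h] at h'; exact hw h'
      set g : ℂ → ℂ := fun z => (F^[N] z - w)⁻¹ with hg
      have hgdiff : DifferentiableOn ℂ g (Metric.closedBall ζ₀ r') :=
        DifferentiableOn.inv (((hFn_diff N).mono hCsub).sub (differentiableOn_const w))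
          (fun z hz => sub_ne_zero_of_ne (h2 z hz))
      have hgdc : DiffContOnCl ℂ g (Metric.ball ζ₀ r') := by
        apply DifferentiableOn.diffContOnCl
        rwa [closure_ball ζ₀ (ne_of_gt hr'pos)]
      have hbound : ∀ z ∈ frontier (Metric.ball ζ₀ r'),
          ‖g z‖ ≤ (‖ζ₀ - w‖ + 1)⁻¹ := by
        intro z hz
        rw [frontier_ball ζ₀ (ne_of_gt hr'pos)] at hz
        have hz' : M < ‖F^[N] z‖ := h1 z hz
        have hlow : ‖ζ₀ - w‖ + 1 ≤ ‖F^[N] z - w‖ := by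
          have h3 : ‖F^[N] z‖ - ‖w‖ ≤ ‖F^[N] z - w‖ := norm_sub_norm_le _ _
          rw [hM] at hz'
          linarith
        rw [hg]
        simp only [norm_inv]
        apply inv_anti₀ (by positivity) hlow
      have hcenter : ‖g ζ₀‖ ≤ (‖ζ₀ - w‖ + 1)⁻¹ := by
        apply Complex.norm_le_of_forall_mem_frontier_norm_le
          Metric.isBounded_ball hgdc hbound
        rw [closure_ball ζ₀ (ne_of_gt hr'pos)]
        exact Metric.mem_closedBall_self (le_of_lt hr'pos)
      rw [hg] at hcenter
      simp only [hFnfix N, norm_inv] at hcenter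
      have hpos : 0 < ‖ζ₀ - w‖ := by
        rw [norm_pos_iff]
        exact sub_ne_zero_of_ne hw.symm
      have h5 : ‖ζ₀ - w‖ + 1 ≤ ‖ζ₀ - w‖ := by
        rwa [inv_le_inv₀ hpos (by positivity)] at hcenter
      linarith
    exact hRnot ⟨‖ζ₀‖, fun z hz => hmain z (by
      intro h; subst h; exact lt_irrefl _ hz)⟩
end
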